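/- arXiv:2105.07258 — 2 statements merged into one kernel-verified Lean document; each statement's English description precedes it below -/
import Mathlib

section
/- For all natural numbers m ≠ n, the Legendre polynomials satisfy ∫_{-1}^{1} L_m(x) L_n(x) dx = 0. -/
open Polynomial

/-- The `m`-th Legendre polynomial, via Rodrigues' formula. -/
noncomputable def legendre (m : ℕ) : Polynomial ℝ :=
  ((1 : ℝ) / (2 ^ m * m.factorial)) • (Polynomial.derivative^[m] ((X ^ 2 - 1) ^ m))

/-! Since `(X ^ 2 - 1) ^ m` vanishes to order `m` at `±1`, all derivatives of order `< m` vanish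
there, so `m` integrations by parts over `[-1, 1]` produce no boundary terms and move the `m`
derivatives of Rodrigues' formula onto the other factor. For `n < m` that factor is a polynomial
of degree `n`, which `m` derivatives kill. -/

namespace Polynomial

theorem eval_iterate_derivative_pow_eq_zero {R : Type*} [CommRing R] {p : R[X]} {x : R}
    (hx : p.IsRoot x) {j m : ℕ} (hj : j < m) : (derivative^[j] (p ^ m)).eval x = 0 := by
  obtain ⟨r, hr⟩ := pow_sub_dvd_iterate_derivative_pow p m j
  rw [hr, eval_mul, eval_pow, hx.eq_zero, zero_pow (by omega), zero_mul]

theorem integral_derivative_mul_eq_neg_integral_mul_derivative {p : ℝ[X]} {a b : ℝ} (q : ℝ[X])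
    (ha : p.eval a = 0) (hb : p.eval b = 0) :
    ∫ x in a..b, (derivative p).eval x * q.eval x =
      -∫ x in a..b, p.eval x * (derivative q).eval x := by
  have hparts := intervalIntegral.integral_mul_deriv_eq_deriv_mul
    (fun x _ => p.hasDerivAt x) (fun x _ => q.hasDerivAt x)
    ((derivative p).continuous.intervalIntegrable a b)
    ((derivative q).continuous.intervalIntegrable a b)
  rw [ha, hb] at hparts
  linarith

theorem integral_iterate_derivative_mul_eq_zero {p q : ℝ[X]} {a b : ℝ} {k : ℕ}
    (hp : ∀ j < k, (derivative^[j] p).eval a = 0 ∧ (derivative^[j] p).eval b = 0)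
    (hq : derivative^[k] q = 0) :
    ∫ x in a..b, (derivative^[k] p).eval x * q.eval x = 0 := by
  induction k generalizing q with
  | zero => simp_all
  | succ k ih =>
    obtain ⟨ha, hb⟩ := hp k k.lt_succ_self
    rw [Function.iterate_succ_apply', integral_derivative_mul_eq_neg_integral_mul_derivative q ha hb,
      ih (fun j hj => hp j (hj.trans k.lt_succ_self)) (by rwa [← Function.iterate_succ_apply]),
      neg_zero]

end Polynomial

theorem integral_legendre_mul_eq_zero {m : ℕ} {q : ℝ[X]} (hq : derivative^[m] q = 0) :
    ∫ x in (-1 : ℝ)..1, (legendre m).eval x * q.eval x = 0 := by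
  have hroot : ∀ x : ℝ, x ^ 2 = 1 → ((X : ℝ[X]) ^ 2 - 1).IsRoot x := fun x hx => by simp [hx]
  simp only [legendre, eval_smul, smul_eq_mul, mul_assoc]
  rw [intervalIntegral.integral_const_mul, integral_iterate_derivative_mul_eq_zero _ hq, mul_zero]
  exact fun j hj => ⟨eval_iterate_derivative_pow_eq_zero (hroot _ (by norm_num)) hj,
    eval_iterate_derivative_pow_eq_zero (hroot _ (by norm_num)) hj⟩

theorem iterate_derivative_legendre_eq_zero {m n : ℕ} (h : n < m) :
    derivative^[m] (legendre n) = 0 := by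
  rw [legendre, iterate_derivative_smul, ← Function.iterate_add_apply,
    iterate_derivative_eq_zero, smul_zero]
  calc ((X ^ 2 - 1 : ℝ[X]) ^ n).natDegree ≤ n * 2 := natDegree_pow_le_of_le n (by compute_degree)
    _ < m + n := by omega

theorem legendre_orthogonal (m n : ℕ) (hmn : m ≠ n) :
    ∫ x in (-1:ℝ)..1, (legendre m).eval x * (legendre n).eval x = 0 := by
  rcases hmn.lt_or_gt with h | h
  · simp_rw [mul_comm ((legendre m).eval _)]
    exact integral_legendre_mul_eq_zero (iterate_derivative_legendre_eq_zero h)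
  · exact integral_legendre_mul_eq_zero (iterate_derivative_legendre_eq_zero h)
end

section
/- For all natural numbers n ≥ m, ∫_{-1}^{1} x^{2n} · d^{2m}/dx^{2m}[(x²-1)^{2m}] dx = ((2n)!/(2(n-m))!) · ∫_{-1}^{1} x^{2(n-m)} (x²-1)^{2m} dx, and this integral is 0 when n < m. -/
/-!
Integrate by parts `2m` times. Since `±1` are roots of multiplicity `2m` of `(x² - 1)^{2m}`, all
boundary terms vanish, and the `i`-th step contributes the factor `-(2n - i)`. The product of these
factors is `(2n)! / (2n - 2m)!`, the descending factorial, which is `0` as soon as `n < m`.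
-/

open Polynomial

-- At `k = 0` the truncated `k - 1` is harmless, as the factor `k` vanishes.
theorem integral_pow_mul_derivative_eval {a b : ℝ} {p : ℝ[X]} (ha : p.IsRoot a) (hb : p.IsRoot b)
    (k : ℕ) :
    ∫ x in a..b, x ^ k * (derivative p).eval x = -k * ∫ x in a..b, x ^ (k - 1) * p.eval x := by
  have hparts := intervalIntegral.integral_mul_deriv_eq_deriv_mul (a := a) (b := b)
    (fun x _ => hasDerivAt_pow k x) (fun x _ => p.hasDerivAt x)
    ((by fun_prop : Continuous fun x : ℝ => (k : ℝ) * x ^ (k - 1)).intervalIntegrable _ _)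
    ((derivative p).continuous.intervalIntegrable _ _)
  rw [hparts, ha.eq_zero, hb.eq_zero, ← intervalIntegral.integral_const_mul]
  simp only [mul_zero, sub_zero, zero_sub, mul_assoc, intervalIntegral.integral_neg, neg_mul]

theorem integral_pow_mul_iterate_derivative_eval {a b : ℝ} {j : ℕ} {p : ℝ[X]}
    (ha : (X - C a) ^ j ∣ p) (hb : (X - C b) ^ j ∣ p) (k : ℕ) :
    ∫ x in a..b, x ^ k * (derivative^[j] p).eval x =
      (-1) ^ j * k.descFactorial j * ∫ x in a..b, x ^ (k - j) * p.eval x := by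
  induction j generalizing p with
  | zero => simp
  | succ j ih =>
    have hroot {c : ℝ} (hc : (X - C c) ^ (j + 1) ∣ p) : p.IsRoot c :=
      dvd_iff_isRoot.mp ((dvd_pow_self _ j.succ_ne_zero).trans hc)
    have hder {c : ℝ} (hc : (X - C c) ^ (j + 1) ∣ p) : (X - C c) ^ j ∣ derivative p := by
      simpa using pow_sub_one_dvd_derivative_of_pow_dvd hc
    rw [Function.iterate_succ_apply, ih (hder ha) (hder hb),
      integral_pow_mul_derivative_eval (hroot ha) (hroot hb), Nat.descFactorial_succ,
      Nat.sub_sub]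
    push_cast
    ring

theorem integral_pow_mul_iterated_deriv (m n : ℕ) :
    (m ≤ n →
      ∫ x in (-1:ℝ)..1,
          x ^ (2 * n) * (Polynomial.derivative^[2 * m] (((X : Polynomial ℝ) ^ 2 - 1) ^ (2 * m))).eval x =
        (((2 * n).factorial : ℝ) / ((2 * (n - m)).factorial : ℝ)) *
          ∫ x in (-1:ℝ)..1, x ^ (2 * (n - m)) * (x ^ 2 - 1) ^ (2 * m)) ∧
    (n < m →
      ∫ x in (-1:ℝ)..1,
          x ^ (2 * n) * (Polynomial.derivative^[2 * m] (((X : Polynomial ℝ) ^ 2 - 1) ^ (2 * m))).eval x = 0) := by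
  have hfactor : (X : ℝ[X]) ^ 2 - 1 = (X - C (-1)) * (X - C 1) := by
    simp only [map_one, map_neg, sub_neg_eq_add]
    ring
  have hparts := integral_pow_mul_iterate_derivative_eval (a := -1) (b := 1) (k := 2 * n)
    (pow_dvd_pow_of_dvd (hfactor ▸ dvd_mul_right _ _) (2 * m))
    (pow_dvd_pow_of_dvd (hfactor ▸ dvd_mul_left _ _) (2 * m))
  simp only [eval_pow, eval_sub, eval_X, eval_one, (even_two_mul m).neg_one_pow, one_mul] at hparts
  refine ⟨fun hmn => ?_, fun hnm => ?_⟩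
  · have hsub : 2 * n - 2 * m = 2 * (n - m) := by omega
    have hdesc :
        ((2 * n).descFactorial (2 * m) : ℝ) = (2 * n).factorial / (2 * (n - m)).factorial := by
      rw [eq_div_iff (by positivity), mul_comm, ← hsub]
      exact_mod_cast Nat.factorial_mul_descFactorial (by omega)
    rw [hparts, hdesc, hsub]
  · rw [hparts, Nat.descFactorial_eq_zero_iff_lt.mpr (by omega)]
    simp
end
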